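/- The polynomials A_{p,q}(t) := Σ_{k=0}^{q} γ_{k,p,q} t^k satisfy A_{p,0}(t) = A_{0,q}(t) = 1 for all p, q ≥ 0, and for all integers p, q ≥ 1 the recurrence A_{p,q}(t) = A_{p,q−1}(t) + A_{p−1,q}(t) + (p+q−1) · t · A_{p−1,q−1}(t) holds as an identity of polynomials. -/

import Mathlib

/-- A signed `(p,q)`-involution: a pair `(π, ε)` where `π` is an involution of
`{1,…,p+q}` and `ε` assigns a sign (`true` = `+`, `false` = `-`) to each fixed
point of `π` (we normalize `ε` to be `true` on non-fixed points), such that the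
number of fixed points with sign `+` minus the number of fixed points with
sign `-` equals `p - q`. -/
def IsSignedInv (p q : ℕ) (x : Equiv.Perm (Fin (p + q)) × (Fin (p + q) → Bool)) : Prop :=
  x.1 * x.1 = 1 ∧ (∀ i, x.1 i ≠ i → x.2 i = true) ∧
    ((Finset.univ.filter fun i => x.1 i = i ∧ x.2 i = true).card : ℤ) -
      ((Finset.univ.filter fun i => x.1 i = i ∧ x.2 i = false).card : ℤ) = (p : ℤ) - (q : ℤ)

/-- `γ_{k,p,q}`: the number of signed `(p,q)`-involutions whose underlying
involution has exactly `k` two-cycles, i.e. exactly `2k` non-fixed points. -/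
noncomputable def gammaCount (k p q : ℕ) : ℕ :=
  Nat.card {x : Equiv.Perm (Fin (p + q)) × (Fin (p + q) → Bool) //
    IsSignedInv p q x ∧ (Finset.univ.filter fun i => x.1 i ≠ i).card = 2 * k}

/-- `α_{p,q}`: the number of signed `(p,q)`-involutions. -/
noncomputable def alphaCount (p q : ℕ) : ℕ :=
  Nat.card {x : Equiv.Perm (Fin (p + q)) × (Fin (p + q) → Bool) // IsSignedInv p q x}
/-- The generating polynomial `A_{p,q}(t) = ∑_{k=0}^{q} γ_{k,p,q} t^k`. -/
noncomputable def Apoly (p q : ℕ) : Polynomial ℕ :=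
  ∑ k ∈ Finset.range (q + 1), Polynomial.C (gammaCount k p q) * Polynomial.X ^ k

/-!
A signed `(p,q)`-involution with `k` two-cycles is an involution of cycle type `(2,…,2)` together
with a choice of signs on its `p + q - 2k` fixed points, and the balance condition says exactly
that `p - k` of them are `+`. Mathlib's count of permutations of a given cycle type therefore
gives `γ_{k,p,q} = (p+q)! / (2^k k! (p-k)! (q-k)!)` for `k ≤ p, q`, and `0` otherwise.
Clearing denominators, the recurrence for the coefficient of `t^(k+1)` in `A_{p+1,q+1}` becomes
`p + q + 2 = (p - k) + (q - k) + 2 (k + 1)`, and the constant coefficients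
`γ_{0,p,q} = C(p+q, p)` satisfy Pascal's rule.
-/

open Finset Equiv Polynomial
open scoped Nat

namespace Equiv.Perm
variable {α : Type*} [Fintype α] [DecidableEq α]

theorem cycleType_eq_replicate_two_iff {σ : Perm α} {k : ℕ} :
    σ.cycleType = Multiset.replicate k 2 ↔ σ * σ = 1 ∧ #σ.support = 2 * k := by
  rw [← sq, pow_prime_eq_one_iff, ← sum_cycleType]
  constructor
  · intro h
    simp [h, Multiset.mem_replicate, mul_comm]
  · rintro ⟨h2, hsum⟩
    rw [Multiset.eq_replicate_card.mpr h2, Multiset.sum_replicate, smul_eq_mul] at hsum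
    rw [Multiset.eq_replicate_card.mpr h2, show Multiset.card σ.cycleType = k by omega]

theorem card_cycleType_replicate_two_mul (k : ℕ) :
    #{σ : Perm α | σ.cycleType = Multiset.replicate k 2} *
        ((Fintype.card α - 2 * k)! * 2 ^ k * k !) =
      if 2 * k ≤ Fintype.card α then (Fintype.card α)! else 0 := by
  have hprod :
      ∏ n ∈ (Multiset.replicate k 2).toFinset, ((Multiset.replicate k 2).count n)! = k ! := by
    rcases k.eq_zero_or_pos with rfl | hk
    · simp
    · rw [Multiset.toFinset_replicate, if_neg hk.ne', prod_singleton,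
        Multiset.count_replicate_self]
  have h2 : ∀ a ∈ Multiset.replicate k 2, 2 ≤ a := fun a ha =>
    (Multiset.eq_of_mem_replicate ha).ge
  have := card_of_cycleType_mul_eq (α := α) (Multiset.replicate k 2)
  rw [Multiset.sum_replicate, Multiset.prod_replicate, hprod, smul_eq_mul, mul_comm k] at this
  simpa only [and_iff_left h2] using this

end Equiv.Perm

theorem card_filter_true_sub_card_filter_false {α : Type*} (F : Finset α) (ε : α → Bool) :
    (#{i ∈ F | ε i = true} : ℤ) - #{i ∈ F | ε i = false} = 2 * #{i ∈ F | ε i = true} - #F := by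
  have := card_filter_add_card_filter_not (s := F) (fun i => ε i = true)
  simp only [Bool.not_eq_true] at this
  omega

theorem card_filter_prod {β γ : Type*} [Fintype β] [Fintype γ] (P : β × γ → Prop)
    [DecidablePred P] : #{x | P x} = ∑ b, #{c | P (b, c)} := by
  simp only [card_filter, Fintype.sum_prod_type]

theorem card_signs_eq_choose {α : Type*} [Fintype α] [DecidableEq α] (F : Finset α) (t : ℕ) :
    #{ε : α → Bool | (∀ i ∉ F, ε i = true) ∧ #{i ∈ F | ε i = true} = t} = F.card.choose t := by
  rw [← card_powersetCard]
  have filter_decide {S : Finset α} (hS : S ⊆ F) :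
      {i ∈ F | decide (i ∈ S ∨ i ∉ F) = true} = S := by
    ext i
    by_cases hi : i ∈ F
    · simp [hi]
    · simp [hi, mt (@hS i) hi]
  refine card_nbij' (fun ε => {i ∈ F | ε i = true}) (fun S i => decide (i ∈ S ∨ i ∉ F))
    (fun ε hε => ?_) (fun S hS => ?_) (fun ε hε => ?_) (fun S hS => ?_)
  · simp only [coe_filter, mem_univ, true_and, Set.mem_ofPred_eq] at hε
    exact mem_powersetCard.mpr ⟨filter_subset _ F, hε.2⟩
  · simp only [mem_coe, mem_powersetCard] at hS
    simp only [coe_filter, mem_univ, true_and, Set.mem_ofPred_eq]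
    exact ⟨fun i hi => by simp [hi], by rw [filter_decide hS.1, hS.2]⟩
  · simp only [coe_filter, mem_univ, true_and, Set.mem_ofPred_eq] at hε
    funext i
    by_cases hi : i ∈ F <;> simp [hi, hε.1]
  · exact filter_decide (mem_powersetCard.mp hS).1

theorem isSignedInv_and_card_support_iff {p q k : ℕ} {σ : Perm (Fin (p + q))}
    (hσ : σ.cycleType = Multiset.replicate k 2) (ε : Fin (p + q) → Bool) :
    IsSignedInv p q (σ, ε) ∧ #σ.support = 2 * k ↔
      (∀ i ∉ σ.supportᶜ, ε i = true) ∧ #{i ∈ σ.supportᶜ | ε i = true} + k = p := by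
  obtain ⟨hinv, hsupp⟩ := Perm.cycleType_eq_replicate_two_iff.mp hσ
  have hfix : #σ.supportᶜ = p + q - 2 * k := by
    rw [card_compl, Fintype.card_fin, hsupp]
  have h2k : 2 * k ≤ p + q := by simpa [hsupp] using card_le_univ σ.support
  have hfilter (b : Bool) :
      ({i | σ i = i ∧ ε i = b} : Finset _) = {i ∈ σ.supportᶜ | ε i = b} := by
    ext i; simp
  have hbal := card_filter_true_sub_card_filter_false σ.supportᶜ ε
  simp only [IsSignedInv, hinv, hsupp, hfilter, hbal, hfix, true_and, and_true, mem_compl,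
    Perm.mem_support, not_not]
  exact and_congr_right fun _ => by push_cast [h2k]; omega

open Classical in
theorem card_filter_isSignedInv (k p q : ℕ) (σ : Perm (Fin (p + q))) :
    #{ε | IsSignedInv p q (σ, ε) ∧ #σ.support = 2 * k} =
      if σ.cycleType = Multiset.replicate k 2 then
        if k ≤ p then (p + q - 2 * k).choose (p - k) else 0
      else 0 := by
  split_ifs with hσ hk
  · have hfix : #σ.supportᶜ = p + q - 2 * k := by
      rw [card_compl, Fintype.card_fin, (Perm.cycleType_eq_replicate_two_iff.mp hσ).2]
    rw [← hfix, ← card_signs_eq_choose]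
    convert rfl using 2
    ext ε
    simp only [mem_filter, mem_univ, true_and, isSignedInv_and_card_support_iff hσ]
    exact and_congr_right fun _ => by omega
  · simp only [isSignedInv_and_card_support_iff hσ, card_eq_zero, filter_eq_empty_iff]
    exact fun ε _ hε => hk (by omega)
  · simp only [card_eq_zero, filter_eq_empty_iff]
    exact fun ε _ ⟨hε, hsupp⟩ => hσ (Perm.cycleType_eq_replicate_two_iff.mpr ⟨hε.1, hsupp⟩)

theorem gammaCount_eq (k p q : ℕ) :
    gammaCount k p q = #{σ : Perm (Fin (p + q)) | σ.cycleType = Multiset.replicate k 2} *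
      if k ≤ p then (p + q - 2 * k).choose (p - k) else 0 := by
  classical
  rw [gammaCount, Nat.card_eq_fintype_card, Fintype.card_subtype, card_filter_prod,
    sum_congr rfl fun σ _ => by convert card_filter_isSignedInv k p q σ using 4; exact Iff.rfl,
    ← sum_filter, sum_const, smul_eq_mul]

theorem gammaCount_zero (p q : ℕ) : gammaCount 0 p q = (p + q).choose p := by
  simp [gammaCount_eq, Perm.cycleType_eq_zero, filter_eq']

theorem gammaCount_eq_zero_of_lt_left {k p : ℕ} (q : ℕ) (h : p < k) : gammaCount k p q = 0 := by
  simp [gammaCount_eq, h.not_ge]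

theorem gammaCount_eq_zero_of_lt_right {k q : ℕ} (p : ℕ) (h : q < k) : gammaCount k p q = 0 := by
  rw [gammaCount_eq]
  by_cases hn : 2 * k ≤ p + q
  · split_ifs with hp
    · rw [Nat.choose_eq_zero_of_lt (by omega), mul_zero]
    · rw [mul_zero]
  · rw [(Perm.card_of_cycleType_eq_zero_iff (Fin (p + q))).mpr
      (fun h => hn (by simpa [mul_comm] using h.1)), zero_mul]

theorem gammaCount_mul_factorial (k i j : ℕ) :
    gammaCount k (k + i) (k + j) * (2 ^ k * k ! * i ! * j !) = (2 * k + i + j)! := by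
  have hI := Perm.card_cycleType_replicate_two_mul (α := Fin (k + i + (k + j))) k
  rw [Fintype.card_fin, if_pos (by omega), show k + i + (k + j) - 2 * k = i + j by omega] at hI
  rw [gammaCount_eq, if_pos (by omega), show k + i + (k + j) - 2 * k = i + j by omega,
    show k + i - k = i by omega, show 2 * k + i + j = k + i + (k + j) by ring, ← hI,
    Nat.choose_symm_add, ← Nat.add_choose_mul_factorial_mul_factorial i j]
  ring

theorem gammaCount_succ_mul_factorial_left (k i j : ℕ) :
    gammaCount (k + 1) (k + i) (k + 1 + j) * (2 ^ (k + 1) * (k + 1)! * i ! * j !) =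
      i * (2 * k + 1 + i + j)! := by
  rcases i with _ | i
  · simp [gammaCount_eq_zero_of_lt_left]
  · have h := gammaCount_mul_factorial (k + 1) i j
    rw [show k + (i + 1) = k + 1 + i by ring, Nat.factorial_succ i,
      show 2 * k + 1 + (i + 1) + j = 2 * (k + 1) + i + j by ring, ← h]
    ring

theorem gammaCount_succ_mul_factorial_right (k i j : ℕ) :
    gammaCount (k + 1) (k + 1 + i) (k + j) * (2 ^ (k + 1) * (k + 1)! * i ! * j !) =
      j * (2 * k + 1 + i + j)! := by
  rcases j with _ | j
  · simp [gammaCount_eq_zero_of_lt_right]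
  · have h := gammaCount_mul_factorial (k + 1) i j
    rw [show k + (j + 1) = k + 1 + j by ring, Nat.factorial_succ j,
      show 2 * k + 1 + i + (j + 1) = 2 * (k + 1) + i + j by ring, ← h]
    ring

theorem gammaCount_succ_succ_succ (k a b : ℕ) :
    gammaCount (k + 1) (a + 1) (b + 1) =
      gammaCount (k + 1) (a + 1) b + gammaCount (k + 1) a (b + 1) +
        (a + b + 1) * gammaCount k a b := by
  rcases lt_or_ge a k with ha | ha
  · simp [gammaCount_eq_zero_of_lt_left, ha, Nat.lt_succ_of_lt ha]
  rcases lt_or_ge b k with hb | hb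
  · simp [gammaCount_eq_zero_of_lt_right, hb, Nat.lt_succ_of_lt hb]
  obtain ⟨i, rfl⟩ := Nat.exists_eq_add_of_le ha
  obtain ⟨j, rfl⟩ := Nat.exists_eq_add_of_le hb
  have hM : 0 < 2 ^ (k + 1) * (k + 1)! * i ! * j ! := by positivity
  refine Nat.eq_of_mul_eq_mul_right hM ?_
  have h1 := gammaCount_mul_factorial (k + 1) i j
  have h2 := gammaCount_succ_mul_factorial_left k i j
  have h3 := gammaCount_succ_mul_factorial_right k i j
  have h4 : gammaCount k (k + i) (k + j) * (2 ^ (k + 1) * (k + 1)! * i ! * j !) =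
      2 * (k + 1) * (2 * k + i + j)! := by
    rw [← gammaCount_mul_factorial k i j, Nat.factorial_succ k]; ring
  rw [show k + i + 1 = k + 1 + i by ring, show k + j + 1 = k + 1 + j by ring, add_mul, add_mul,
    mul_assoc (k + i + (k + j) + 1), h1, h2, h3, h4,
    show 2 * (k + 1) + i + j = 2 * k + 1 + i + j + 1 by ring, Nat.factorial_succ, show 2 * k + 1 + i + j = 2 * k + i + j + 1 by ring,
    Nat.factorial_succ (2 * k + i + j)]
  ring

theorem coeff_Apoly (p q k : ℕ) : (Apoly p q).coeff k = gammaCount k p q := by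
  simp only [Apoly, finsetSum_coeff, coeff_C_mul_X_pow, sum_ite_eq, mem_range]
  split_ifs with hk
  · rfl
  · exact (gammaCount_eq_zero_of_lt_right p (by omega)).symm

theorem stmt11 :
    (∀ p : ℕ, Apoly p 0 = 1) ∧ (∀ q : ℕ, Apoly 0 q = 1) ∧
      ∀ p q : ℕ, 1 ≤ p → 1 ≤ q →
        Apoly p q =
          Apoly p (q - 1) + Apoly (p - 1) q +
            Polynomial.C (p + q - 1) * Polynomial.X * Apoly (p - 1) (q - 1) := by
  refine ⟨fun p => ext fun k => ?_, fun q => ext fun k => ?_, fun p q hp hq => ?_⟩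
  · rcases k with _ | k
    · simp [coeff_Apoly, gammaCount_zero]
    · simp [coeff_Apoly, coeff_one, gammaCount_eq_zero_of_lt_right]
  · rcases k with _ | k
    · simp [coeff_Apoly, gammaCount_zero]
    · simp [coeff_Apoly, coeff_one, gammaCount_eq_zero_of_lt_left]
  · obtain ⟨a, rfl⟩ := Nat.exists_eq_add_of_le' hp
    obtain ⟨b, rfl⟩ := Nat.exists_eq_add_of_le' hq
    ext k
    simp only [coeff_add, mul_assoc, coeff_C_mul, coeff_Apoly, Nat.add_sub_cancel]
    rcases k with _ | k
    · rw [coeff_X_mul_zero, mul_zero, add_zero, gammaCount_zero, gammaCount_zero, gammaCount_zero,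
        show a + 1 + (b + 1) = a + (b + 1) + 1 by ring, Nat.choose_succ_succ',
        show a + 1 + b = a + (b + 1) by ring, add_comm]
    · rw [coeff_X_mul, coeff_Apoly, gammaCount_succ_succ_succ,
        show a + 1 + (b + 1) - 1 = a + b + 1 by omega]
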